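/- Let θ, x, z solve x' = cos θ, z' = sin θ, z > 0, with θ'(s) = ((m−1)cos θ(s) + n)/z(s), n ≥ 0, n + m − 1 > 0, m < n + 1, θ(0) = 0. If there exists s₂ > 0 with θ(s₂) = π, then with T = 2s₂ the solution satisfies the quasi-periodicity relations x(s+T) = x(s) + x(T), z(s+T) = z(s), θ(s+T) = θ(s) + 2π for all s, i.e. the generating curve is invariant under the horizontal translation by (x(T), 0). -/

import Mathlib

/-!
The pair `(θ, z)` solves the autonomous system `(θ, z)' = V(θ, z)`, `V = curveField m n` smooth on `z > 0`, and
`x` is recovered by integrating `cos θ`. The system is reversible: if `θ(c) = kπ`, then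
`s ↦ (2kπ - θ(2c - s), z(2c - s))` is again a solution through the same point, so by uniqueness
the curve is symmetric about `s = c`. Composing the symmetries about `s = 0` and `s = s₂` gives
the translation `s ↦ s + 2s₂`, which shifts `θ` by `2π` and fixes `z`; then `x(s + 2s₂) - x(s)`
has zero derivative.
-/

open Real Topology

theorem ODE_solution_unique_of_contDiffAt {E : Type*} [NormedAddCommGroup E] [NormedSpace ℝ E]
    {v : E → E} {f g : ℝ → E} {t₀ : ℝ}
    (hf : ∀ t, HasDerivAt f (v (f t)) t) (hg : ∀ t, HasDerivAt g (v (g t)) t)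
    (hv : ∀ t, ContDiffAt ℝ 1 v (f t)) (heq : f t₀ = g t₀) : f = g := by
  have hfc : Continuous f := continuous_iff_continuousAt.2 fun t => (hf t).continuousAt
  have hgc : Continuous g := continuous_iff_continuousAt.2 fun t => (hg t).continuousAt
  have hopen : IsOpen {t | f t = g t} := by
    refine isOpen_iff_mem_nhds.2 fun t (ht : f t = g t) => ?_
    obtain ⟨K, s, hs, hK⟩ := (hv t).exists_lipschitzOnWith
    have hfs : ∀ᶠ u in 𝓝 t, f u ∈ s := hfc.continuousAt hs
    have hgs : ∀ᶠ u in 𝓝 t, g u ∈ s := hgc.continuousAt (ht ▸ hs)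
    exact ODE_solution_unique_of_eventually (v := fun _ => v) (.of_forall fun _ => hK)
      (hfs.mono fun u hu => ⟨hf u, hu⟩) (hgs.mono fun u hu => ⟨hg u, hu⟩) ht
  have hclopen : IsClopen {t | f t = g t} := ⟨isClosed_eq hfc hgc, hopen⟩
  funext t
  exact Set.eq_univ_iff_forall.1 (hclopen.eq_univ ⟨t₀, heq⟩) t

theorem sub_eq_of_hasDerivAt_of_periodic {u u' : ℝ → ℝ} {T : ℝ}
    (hu : ∀ s, HasDerivAt u (u' s) s) (hper : Function.Periodic u' T) (s : ℝ) :
    u (s + T) = u s + (u T - u 0) := by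
  have hdiff : ∀ s, HasDerivAt (fun s => u (s + T) - u s) 0 s := fun s => by
    have h := ((hu (s + T)).comp_add_const s T).sub (hu s)
    rwa [hper s, sub_self] at h
  have := is_const_of_deriv_eq_zero (fun s => (hdiff s).differentiableAt)
    (fun s => (hdiff s).deriv) s 0
  simp only [zero_add] at this
  linarith

noncomputable def curveField (m n : ℝ) (p : ℝ × ℝ) : ℝ × ℝ :=
  (((m - 1) * cos p.1 + n) / p.2, sin p.1)

theorem contDiffAt_curveField (m n : ℝ) {p : ℝ × ℝ} (hp : p.2 ≠ 0) :
    ContDiffAt ℝ 1 (curveField m n) p := by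
  unfold curveField
  fun_prop (disch := exact hp)

theorem curveField_reflect (m n : ℝ) (k : ℤ) (p : ℝ × ℝ) :
    curveField m n (k * (2 * π) - p.1, p.2) = ((curveField m n p).1, -(curveField m n p).2) := by
  simp only [curveField, cos_int_mul_two_pi_sub, sin_int_mul_two_pi_sub]

section

variable {m n : ℝ} {f : ℝ → ℝ × ℝ}

theorem hasDerivAt_curveField_reflect (hf : ∀ t, HasDerivAt f (curveField m n (f t)) t)
    (k : ℤ) (c t : ℝ) :
    HasDerivAt (fun s => (k * (2 * π) - (f (c - s)).1, (f (c - s)).2))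
      (curveField m n (k * (2 * π) - (f (c - t)).1, (f (c - t)).2)) t := by
  have h := (hf (c - t)).comp_const_sub c t
  have h₁ := (hasFDerivAt_fst.comp_hasDerivAt t h).const_sub (k * (2 * π))
  have h₂ := hasFDerivAt_snd.comp_hasDerivAt t h
  rw [curveField_reflect]
  simpa using h₁.prodMk h₂

theorem curveField_solution_reflect (hf : ∀ t, HasDerivAt f (curveField m n (f t)) t)
    (hpos : ∀ t, 0 < (f t).2) {k : ℤ} {c : ℝ} (hc : (f c).1 = k * π) (s : ℝ) :
    f (c + s) = (k * (2 * π) - (f (c - s)).1, (f (c - s)).2) := by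
  have hshift : ∀ t, HasDerivAt (fun s => f (c + s)) (curveField m n (f (c + t))) t :=
    fun t => (hf (c + t)).comp_const_add c t
  refine congrFun (ODE_solution_unique_of_contDiffAt (t₀ := 0) hshift
    (hasDerivAt_curveField_reflect hf k c)
    (fun t => contDiffAt_curveField m n (hpos _).ne') ?_) s
  ext <;> simp only [add_zero, sub_zero, hc]
  ring

theorem curveField_solution_periodic (hf : ∀ t, HasDerivAt f (curveField m n (f t)) t)
    (hpos : ∀ t, 0 < (f t).2) {k₁ k₂ : ℤ} {c₁ c₂ : ℝ} (h₁ : (f c₁).1 = k₁ * π)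
    (h₂ : (f c₂).1 = k₂ * π) (s : ℝ) :
    f (s + 2 * (c₂ - c₁)) = ((f s).1 + (k₂ - k₁) * (2 * π), (f s).2) := by
  have e₂ := curveField_solution_reflect hf hpos h₂ (c₂ - 2 * c₁ + s)
  have e₁ := curveField_solution_reflect hf hpos h₁ (c₁ - s)
  rw [show c₂ + (c₂ - 2 * c₁ + s) = s + 2 * (c₂ - c₁) by ring,
    show c₂ - (c₂ - 2 * c₁ + s) = c₁ + (c₁ - s) by ring, e₁,
    show c₁ - (c₁ - s) = s by ring] at e₂
  rw [e₂]
  ext <;> simp only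
  ring

end

theorem stmt18_general (m n : ℝ) (θ x z θd : ℝ → ℝ)
    (hx : ∀ s, HasDerivAt x (Real.cos (θ s)) s)
    (hz : ∀ s, HasDerivAt z (Real.sin (θ s)) s)
    (hθ : ∀ s, HasDerivAt θ (θd s) s)
    (hzpos : ∀ s, 0 < z s)
    (hode : ∀ s, θd s = ((m - 1) * Real.cos (θ s) + n) / z s)
    (hθ0 : θ 0 = 0) (hx0 : x 0 = 0)
    (s₂ : ℝ) (hθs₂ : θ s₂ = π) :
    ∀ s, x (s + 2 * s₂) = x s + x (2 * s₂) ∧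
      z (s + 2 * s₂) = z s ∧
      θ (s + 2 * s₂) = θ s + 2 * π := by
  have hf : ∀ t, HasDerivAt (fun s => (θ s, z s)) (curveField m n (θ t, z t)) t := fun t => by
    simpa only [curveField, hode] using (hθ t).prodMk (hz t)
  have hper := curveField_solution_periodic (k₁ := 0) (k₂ := 1) hf hzpos
    (by simpa using hθ0) (by simpa using hθs₂)
  simp only [Prod.mk.injEq, sub_zero, Int.cast_one, Int.cast_zero, one_mul] at hper
  have hxper := sub_eq_of_hasDerivAt_of_periodic (T := 2 * s₂) hx fun s => by
    simp only [(hper s).1, cos_add_two_pi]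
  intro s
  exact ⟨by rw [hxper, hx0, sub_zero], (hper s).2, (hper s).1⟩

/-- Case `n + m - 1 > 0`, `m < n + 1`: if `θ(s₂) = π` for some `s₂ > 0`, then
with `T = 2 s₂` the generating curve is quasi-periodic:
`x(s+T) = x(s) + x(T)`, `z(s+T) = z(s)`, `θ(s+T) = θ(s) + 2π`, i.e. it is
invariant under the horizontal translation by `(x(T), 0)`. -/
theorem stmt18 (m n : ℝ) (θ x z θd : ℝ → ℝ)
    (hx : ∀ s, HasDerivAt x (Real.cos (θ s)) s)
    (hz : ∀ s, HasDerivAt z (Real.sin (θ s)) s)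
    (hθ : ∀ s, HasDerivAt θ (θd s) s)
    (hzpos : ∀ s, 0 < z s)
    (hode : ∀ s, θd s = ((m - 1) * Real.cos (θ s) + n) / z s)
    (hn : 0 ≤ n) (hmn : 0 < n + m - 1) (hm : m < n + 1)
    (hθ0 : θ 0 = 0) (hx0 : x 0 = 0)
    (s₂ : ℝ) (hs₂ : 0 < s₂) (hθs₂ : θ s₂ = π) :
    ∀ s, x (s + 2 * s₂) = x s + x (2 * s₂) ∧
      z (s + 2 * s₂) = z s ∧
      θ (s + 2 * s₂) = θ s + 2 * π :=
  stmt18_general m n θ x z θd hx hz hθ hzpos hode hθ0 hx0 s₂ hθs₂
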